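/- Let M, U, V : ℝ² → ℝ be smooth functions of (θ, v) satisfying the plane-polarized colliding plane wave evolution equations U_{θv} = U_θ U_v, V_{θv} = ½(U_θ V_v + U_v V_θ), and M_{θv} = ½(−U_θ U_v + V_θ V_v). Define the v-constraint function G = U_{vv} − ½(U_v² + V_v²) + U_v M_v. Then G satisfies the propagation equation G_θ = U_θ G. -/

import Mathlib

open Real

/-- Partial derivative with respect to the first variable `θ`. -/
noncomputable def pd1 (F : ℝ → ℝ → ℝ) : ℝ → ℝ → ℝ := fun θ v => deriv (fun t => F t v) θ

/-- Partial derivative with respect to the second variable `v`. -/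
noncomputable def pd2 (F : ℝ → ℝ → ℝ) : ℝ → ℝ → ℝ := fun θ v => deriv (fun s => F θ s) v

/-!
Differentiate `G` in `θ` and commute the mixed partials (Schwarz): every `θ`-derivative of a
`v`-derivative is then given by the evolution equations, e.g.
`U_{vvθ} = ∂_v (U_θ U_v) = U_θ (U_v² + U_{vv})`, and the terms collect to `U_θ G`.
-/

open Function
open scoped ContDiff

section PartialDerivatives

variable {F f g : ℝ → ℝ → ℝ} {θ v : ℝ}

lemma hasDerivAt_fderiv_uncurry_fst (hF : DifferentiableAt ℝ (uncurry F) (θ, v)) :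
    HasDerivAt (fun t => F t v) (fderiv ℝ (uncurry F) (θ, v) (1, 0)) θ :=
  HasFDerivAt.comp_hasDerivAt (l := uncurry F) θ hF.hasFDerivAt
    ((hasDerivAt_id θ).prodMk (hasDerivAt_const θ v))

lemma hasDerivAt_fderiv_uncurry_snd (hF : DifferentiableAt ℝ (uncurry F) (θ, v)) :
    HasDerivAt (fun s => F θ s) (fderiv ℝ (uncurry F) (θ, v) (0, 1)) v :=
  HasFDerivAt.comp_hasDerivAt (l := uncurry F) v hF.hasFDerivAt
    ((hasDerivAt_const v θ).prodMk (hasDerivAt_id v))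

lemma hasDerivAt_pd1 (hF : DifferentiableAt ℝ (uncurry F) (θ, v)) :
    HasDerivAt (fun t => F t v) (pd1 F θ v) θ :=
  (hasDerivAt_fderiv_uncurry_fst hF).differentiableAt.hasDerivAt

lemma hasDerivAt_pd2 (hF : DifferentiableAt ℝ (uncurry F) (θ, v)) :
    HasDerivAt (fun s => F θ s) (pd2 F θ v) v :=
  (hasDerivAt_fderiv_uncurry_snd hF).differentiableAt.hasDerivAt

lemma uncurry_pd1_eq_fderiv (hF : Differentiable ℝ (uncurry F)) :
    uncurry (pd1 F) = fun p => fderiv ℝ (uncurry F) p (1, 0) :=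
  funext fun p => (hasDerivAt_fderiv_uncurry_fst (hF p)).deriv

lemma uncurry_pd2_eq_fderiv (hF : Differentiable ℝ (uncurry F)) :
    uncurry (pd2 F) = fun p => fderiv ℝ (uncurry F) p (0, 1) :=
  funext fun p => (hasDerivAt_fderiv_uncurry_snd (hF p)).deriv

lemma contDiff_uncurry_pd1 {m n : WithTop ℕ∞} (hF : ContDiff ℝ m (uncurry F)) (hmn : n + 1 ≤ m) :
    ContDiff ℝ n (uncurry (pd1 F)) := by
  rw [uncurry_pd1_eq_fderiv (hF.differentiable (zero_lt_one.trans_le (le_add_self.trans hmn)).ne')]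
  exact (hF.fderiv_right hmn).clm_apply contDiff_const

lemma contDiff_uncurry_pd2 {m n : WithTop ℕ∞} (hF : ContDiff ℝ m (uncurry F)) (hmn : n + 1 ≤ m) :
    ContDiff ℝ n (uncurry (pd2 F)) := by
  rw [uncurry_pd2_eq_fderiv (hF.differentiable (zero_lt_one.trans_le (le_add_self.trans hmn)).ne')]
  exact (hF.fderiv_right hmn).clm_apply contDiff_const

lemma pd1_pd2_comm (hF : ContDiff ℝ 2 (uncurry F)) : pd1 (pd2 F) = pd2 (pd1 F) := by
  have hdiff : Differentiable ℝ (fderiv ℝ (uncurry F)) :=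
    (hF.fderiv_right (m := 1) le_rfl).differentiable one_ne_zero
  have hsnd : ∀ p w z, fderiv ℝ (fun q => fderiv ℝ (uncurry F) q w) p z
      = fderiv ℝ (fderiv ℝ (uncurry F)) p z w := fun p w z => by
    simp [fderiv_clm_apply (hdiff p) (differentiableAt_const w)]
  funext θ v
  rw [← uncurry_apply_pair (pd1 (pd2 F)), ← uncurry_apply_pair (pd2 (pd1 F)),
    uncurry_pd1_eq_fderiv ((contDiff_uncurry_pd2 hF le_rfl).differentiable one_ne_zero),
    uncurry_pd2_eq_fderiv ((contDiff_uncurry_pd1 hF le_rfl).differentiable one_ne_zero),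
    uncurry_pd2_eq_fderiv (hF.differentiable two_ne_zero),
    uncurry_pd1_eq_fderiv (hF.differentiable two_ne_zero)]
  simp only [hsnd]
  exact (hF.contDiffAt.isSymmSndFDerivAt (by simp)) _ _

lemma pd2_mul (hf : DifferentiableAt ℝ (uncurry f) (θ, v))
    (hg : DifferentiableAt ℝ (uncurry g) (θ, v)) :
    pd2 (fun a b => f a b * g a b) θ v = pd2 f θ v * g θ v + f θ v * pd2 g θ v :=
  ((hasDerivAt_pd2 hf).mul (hasDerivAt_pd2 hg)).deriv

end PartialDerivatives

noncomputable def vConstraint (U V M : ℝ → ℝ → ℝ) : ℝ → ℝ → ℝ := fun θ v =>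
  pd2 (pd2 U) θ v - (1/2) * ((pd2 U θ v)^2 + (pd2 V θ v)^2) + pd2 U θ v * pd2 M θ v

lemma pd1_vConstraint {U V M : ℝ → ℝ → ℝ} {θ v : ℝ}
    (hUvv : DifferentiableAt ℝ (uncurry (pd2 (pd2 U))) (θ, v))
    (hUv : DifferentiableAt ℝ (uncurry (pd2 U)) (θ, v))
    (hVv : DifferentiableAt ℝ (uncurry (pd2 V)) (θ, v))
    (hMv : DifferentiableAt ℝ (uncurry (pd2 M)) (θ, v)) :
    pd1 (vConstraint U V M) θ v = pd1 (pd2 (pd2 U)) θ v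
      - (pd2 U θ v * pd1 (pd2 U) θ v + pd2 V θ v * pd1 (pd2 V) θ v)
      + (pd1 (pd2 U) θ v * pd2 M θ v + pd2 U θ v * pd1 (pd2 M) θ v) := by
  have hUv' := hasDerivAt_pd1 hUv
  have h := ((hasDerivAt_pd1 hUvv).sub
    (((hUv'.pow 2).add ((hasDerivAt_pd1 hVv).pow 2)).const_mul (1/2))).add
    (hUv'.mul (hasDerivAt_pd1 hMv))
  refine h.deriv.trans ?_
  push_cast
  ring

/-- For smooth solutions of the plane-polarized colliding plane wave evolution equations,
the `v`-constraint function `G = U_{vv} − ½(U_v² + V_v²) + U_v M_v` satisfies the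
propagation equation `G_θ = U_θ G`. -/
theorem v_constraint_propagation
    (M U V : ℝ → ℝ → ℝ)
    (hM : ContDiff ℝ (⊤ : ℕ∞) (fun p : ℝ × ℝ => M p.1 p.2))
    (hU : ContDiff ℝ (⊤ : ℕ∞) (fun p : ℝ × ℝ => U p.1 p.2))
    (hV : ContDiff ℝ (⊤ : ℕ∞) (fun p : ℝ × ℝ => V p.1 p.2))
    (e1 : ∀ θ v, pd2 (pd1 U) θ v = pd1 U θ v * pd2 U θ v)
    (e2 : ∀ θ v, pd2 (pd1 V) θ v
        = (1/2) * (pd1 U θ v * pd2 V θ v + pd2 U θ v * pd1 V θ v))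
    (e3 : ∀ θ v, pd2 (pd1 M) θ v
        = (1/2) * (-(pd1 U θ v * pd2 U θ v) + pd1 V θ v * pd2 V θ v))
    (G : ℝ → ℝ → ℝ)
    (hG : ∀ θ v, G θ v = pd2 (pd2 U) θ v
        - (1/2) * ((pd2 U θ v)^2 + (pd2 V θ v)^2) + pd2 U θ v * pd2 M θ v) :
    ∀ θ v, pd1 G θ v = pd1 U θ v * G θ v := by
  obtain rfl : G = vConstraint U V M := funext₂ hG
  have hinf : ∞ + 1 ≤ ∞ := le_of_eq (by simp)
  have hUv : ContDiff ℝ ∞ (uncurry (pd2 U)) := contDiff_uncurry_pd2 hU hinf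
  have hUvv : ContDiff ℝ ∞ (uncurry (pd2 (pd2 U))) := contDiff_uncurry_pd2 hUv hinf
  have hVv : ContDiff ℝ ∞ (uncurry (pd2 V)) := contDiff_uncurry_pd2 hV hinf
  have hMv : ContDiff ℝ ∞ (uncurry (pd2 M)) := contDiff_uncurry_pd2 hM hinf
  have hUθv : pd1 (pd2 U) = fun θ v => pd1 U θ v * pd2 U θ v :=
    (pd1_pd2_comm (contDiff_infty.1 hU 2)).trans (funext₂ e1)
  intro θ v
  have hUvvθ : pd1 (pd2 (pd2 U)) θ v
      = pd1 U θ v * pd2 U θ v ^ 2 + pd1 U θ v * pd2 (pd2 U) θ v := by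
    rw [pd1_pd2_comm (contDiff_infty.1 hUv 2), hUθv,
      pd2_mul ((contDiff_uncurry_pd1 hU hinf).differentiable (by simp) _)
        (hUv.differentiable (by simp) _), e1]
    ring
  rw [pd1_vConstraint (hUvv.differentiable (by simp) _) (hUv.differentiable (by simp) _)
      (hVv.differentiable (by simp) _) (hMv.differentiable (by simp) _), hUvvθ, hUθv,
    pd1_pd2_comm (contDiff_infty.1 hV 2), pd1_pd2_comm (contDiff_infty.1 hM 2), e2, e3, vConstraint]
  ring
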